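/- arXiv:0911.0433 — 4 statements merged into one kernel-verified Lean document; each statement's English description precedes it below -/
import Mathlib

section
/- Let Y be an n×n complex matrix similar to a Jordan form via W (Y = W⁻¹ J W), with λ := max over eigenvalues λⱼ of Re(λⱼ). Then for every δ > 1, ‖e^{δY}‖ ≤ c·n·δ^{n−1}·e^{λδ}, where c = ‖W‖·‖W⁻¹‖ and ‖·‖ is the operator norm induced by the Euclidean norm. -/
/-!
Write `J = D + N` with `D` the diagonal of `J`. Since a `1` on the superdiagonal only joins equal
diagonal entries, `D` commutes with `N`, so `e^{δJ} = e^{δD} e^{δN}`. The diagonal entries of the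
triangular matrix `J` are eigenvalues of `Y`, whence `‖e^{δD}‖ ≤ e^{λδ}`. The power `N^k` lives on
the `k`-th superdiagonal with entries of modulus at most `1`, so `N` is nilpotent and every entry of
`e^{δN}` is a single term `δ^k/k! (N^k)_{ab}` of modulus at most `δ^{n-1}`; the Frobenius bound
then gives `‖e^{δN}‖ ≤ n δ^{n-1}`. Conjugation by `W` costs the factor `‖W‖ ‖W⁻¹‖`.
-/

open Matrix
open scoped Matrix.Norms.L2Operator

/-- `J` is a matrix in Jordan normal form: zero except on the diagonal and the
superdiagonal; superdiagonal entries are `0` or `1`, and a `1` can only connect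
equal diagonal entries (i.e. it lies within a single Jordan block). -/
def IsJordanForm {k : ℕ} (J : Matrix (Fin k) (Fin k) ℂ) : Prop :=
  (∀ i j : Fin k, (j : ℕ) ≠ (i : ℕ) → (j : ℕ) ≠ (i : ℕ) + 1 → J i j = 0) ∧
  (∀ i j : Fin k, (j : ℕ) = (i : ℕ) + 1 → J i j = 0 ∨ (J i j = 1 ∧ J i i = J j j))

theorem NormedSpace.exp_eq_sum_range_of_pow_eq_zero (𝕂 : Type*) {𝔸 : Type*} [Field 𝕂]
    [CharZero 𝕂] [Ring 𝔸] [Algebra 𝕂 𝔸] [TopologicalSpace 𝔸] [IsTopologicalRing 𝔸] {x : 𝔸}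
    {k : ℕ} (hx : x ^ k = 0) :
    NormedSpace.exp x = ∑ i ∈ Finset.range k, (i.factorial⁻¹ : 𝕂) • x ^ i := by
  rw [NormedSpace.exp_eq_tsum 𝕂]
  exact tsum_eq_sum fun i hi => by
    rw [pow_eq_zero_of_le (by simpa using hi) hx, smul_zero]

namespace Matrix

theorem l2_opNorm_le_sqrt_sum_sq {𝕜 m n : Type*} [RCLike 𝕜] [Fintype m] [Fintype n] [DecidableEq n]
    (A : Matrix m n 𝕜) : ‖A‖ ≤ √(∑ i, ∑ j, ‖A i j‖ ^ 2) := by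
  rw [l2_opNorm_def]
  refine ContinuousLinearMap.opNorm_le_bound _ (by positivity) fun x => ?_
  refine (sq_le_sq₀ (norm_nonneg _) (by positivity)).mp ?_
  rw [mul_pow, Real.sq_sqrt (by positivity), EuclideanSpace.norm_sq_eq,
    EuclideanSpace.norm_sq_eq, Finset.sum_mul]
  refine Finset.sum_le_sum fun i _ => ?_
  calc ‖∑ j, A i j * x j‖ ^ 2 ≤ (∑ j, ‖A i j‖ * ‖x j‖) ^ 2 := by
        gcongr
        exact (norm_sum_le _ _).trans_eq (by simp only [norm_mul])
    _ ≤ _ := Finset.sum_mul_sq_le_sq_mul_sq _ _ _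

theorem l2_opNorm_le_card_mul_of_norm_apply_le {𝕜 n : Type*} [RCLike 𝕜] [Fintype n] [DecidableEq n]
    (A : Matrix n n 𝕜) {M : ℝ} (hM : 0 ≤ M) (h : ∀ i j, ‖A i j‖ ≤ M) :
    ‖A‖ ≤ Fintype.card n * M := by
  calc ‖A‖ ≤ √(∑ i, ∑ j, ‖A i j‖ ^ 2) := l2_opNorm_le_sqrt_sum_sq A
    _ ≤ √(∑ _i : n, ∑ _j : n, M ^ 2) := by gcongr with i _ j _; exact h i j
    _ = Fintype.card n * M := by
        rw [Finset.sum_const, Finset.sum_const, Finset.card_univ, nsmul_eq_mul, nsmul_eq_mul,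
          ← mul_assoc, ← sq, ← mul_pow, Real.sqrt_sq (by positivity)]

theorem IsUpperTriangular.diag_mem_spectrum {R n : Type*} [CommRing R] [Nontrivial R]
    [Fintype n] [DecidableEq n] [LinearOrder n] {M : Matrix n n R} (h : M.IsUpperTriangular)
    (i : n) : M i i ∈ spectrum R M :=
  mem_spectrum_of_isRoot_charpoly <| by
    rw [charpoly_of_isUpperTriangular M h, Polynomial.IsRoot, Polynomial.eval_prod]
    exact Finset.prod_eq_zero (Finset.mem_univ i) (by simp)

section Superdiagonal

variable {R : Type*} {n : ℕ} {N : Matrix (Fin n) (Fin n) R}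

theorem pow_apply_eq_zero_of_superdiagonal [Semiring R]
    (hN : ∀ a b : Fin n, (b : ℕ) ≠ a + 1 → N a b = 0) (k : ℕ) {a b : Fin n}
    (h : (b : ℕ) ≠ a + k) : (N ^ k) a b = 0 := by
  induction k generalizing b with
  | zero => exact one_apply_ne fun hab => h (by simp [hab])
  | succ k ih =>
    rw [pow_succ, mul_apply]
    refine Finset.sum_eq_zero fun l _ => ?_
    by_cases hl : (l : ℕ) = a + k
    · rw [hN l b (by omega), mul_zero]
    · rw [ih hl, zero_mul]

theorem pow_eq_zero_of_superdiagonal [Semiring R]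
    (hN : ∀ a b : Fin n, (b : ℕ) ≠ a + 1 → N a b = 0) : N ^ n = 0 := by
  ext a b
  exact pow_apply_eq_zero_of_superdiagonal hN n (by have := b.isLt; omega)

theorem norm_pow_apply_le_one_of_superdiagonal [SeminormedRing R] [NormOneClass R]
    (hN : ∀ a b : Fin n, (b : ℕ) ≠ a + 1 → N a b = 0) (hN1 : ∀ a b, ‖N a b‖ ≤ 1) (k : ℕ)
    (a b : Fin n) : ‖(N ^ k) a b‖ ≤ 1 := by
  induction k generalizing a with
  | zero => rw [pow_zero, one_apply]; split_ifs <;> simp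
  | succ k ih =>
    rw [pow_succ', mul_apply]
    by_cases ha : (a : ℕ) + 1 < n
    · rw [Finset.sum_eq_single ⟨a + 1, ha⟩]
      · exact (norm_mul_le _ _).trans (mul_le_one₀ (hN1 _ _) (norm_nonneg _) (ih _))
      · exact fun l _ hl => by rw [hN a l fun h => hl (Fin.ext h), zero_mul]
      · simp
    · rw [Finset.sum_eq_zero fun l _ => by rw [hN a l (by omega), zero_mul]]
      simp

end Superdiagonal

theorem norm_exp_smul_apply_le_of_superdiagonal {𝕜 : Type*} [RCLike 𝕜] {n : ℕ}
    {N : Matrix (Fin n) (Fin n) 𝕜}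
    (hN : ∀ a b : Fin n, (b : ℕ) ≠ a + 1 → N a b = 0) (hN1 : ∀ a b, ‖N a b‖ ≤ 1) {δ : ℝ}
    (hδ : 1 ≤ δ) (a b : Fin n) : ‖NormedSpace.exp (δ • N) a b‖ ≤ δ ^ (n - 1) := by
  have hpow : (δ • N) ^ n = 0 := by rw [smul_pow, pow_eq_zero_of_superdiagonal hN, smul_zero]
  rw [NormedSpace.exp_eq_sum_range_of_pow_eq_zero 𝕜 hpow, sum_apply,
    Finset.sum_eq_single ((b : ℕ) - a)]
  · rw [smul_apply, smul_pow, smul_apply, norm_smul, norm_smul, norm_inv, RCLike.norm_natCast,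
      norm_pow, Real.norm_of_nonneg (by linarith)]
    calc _ ≤ (1 : ℝ) * (δ ^ (n - 1) * 1) := by
          gcongr ?_ * (?_ * ?_)
          · exact inv_le_one_of_one_le₀ (Nat.one_le_cast.mpr (Nat.factorial_pos _))
          · exact pow_le_pow_right₀ hδ (by omega)
          · exact norm_pow_apply_le_one_of_superdiagonal hN hN1 _ a b
      _ = δ ^ (n - 1) := by ring
  · intro k _ hk
    rw [smul_apply, smul_pow, smul_apply, pow_apply_eq_zero_of_superdiagonal hN k (by omega),
      smul_zero, smul_zero]
  · intro h
    simp only [Finset.mem_range] at h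
    omega

theorem norm_exp_smul_diagonal_le {ι : Type*} [Fintype ι] [DecidableEq ι] (d : ι → ℂ)
    {lam δ : ℝ} (hδ : 0 ≤ δ) (hd : ∀ i, (d i).re ≤ lam) :
    ‖NormedSpace.exp (δ • diagonal d)‖ ≤ Real.exp (lam * δ) := by
  rw [← diagonal_smul, exp_diagonal, l2_opNorm_diagonal,
    pi_norm_le_iff_of_nonneg (Real.exp_pos _).le]
  intro i
  rw [Pi.exp_def]
  dsimp only
  rw [Pi.smul_apply, ← Complex.exp_eq_exp_ℂ, Complex.norm_exp, Real.exp_le_exp,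
    Complex.real_smul, Complex.re_ofReal_mul, mul_comm]
  exact mul_le_mul_of_nonneg_right (hd i) hδ

end Matrix

namespace IsJordanForm

variable {k : ℕ} {J : Matrix (Fin k) (Fin k) ℂ}

theorem isUpperTriangular (hJ : IsJordanForm J) : J.IsUpperTriangular :=
  fun a b hab => hJ.1 a b (Fin.val_ne_of_ne hab.ne) (by have : (b : ℕ) < a := hab; omega)

theorem commute_diagonal_diag (hJ : IsJordanForm J) : Commute (diagonal J.diag) J := by
  ext a b
  simp only [diagonal_mul, mul_diagonal, diag]
  by_cases h1 : (b : ℕ) = a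
  · rw [Fin.ext h1]
  by_cases h2 : (b : ℕ) = a + 1
  · rcases hJ.2 a b h2 with h | h
    · simp [h]
    · rw [h.2, mul_comm]
  · simp [hJ.1 a b h1 h2]

theorem sub_diagonal_apply_eq_zero (hJ : IsJordanForm J) (a b : Fin k) (h : (b : ℕ) ≠ a + 1) :
    (J - diagonal J.diag) a b = 0 := by
  by_cases hab : a = b
  · simp [hab]
  · rw [Matrix.sub_apply, diagonal_apply_ne _ hab, hJ.1 a b (fun h' => hab (Fin.ext h'.symm)) h,
      sub_zero]

theorem norm_sub_diagonal_apply_le_one (hJ : IsJordanForm J) (a b : Fin k) :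
    ‖(J - diagonal J.diag) a b‖ ≤ 1 := by
  by_cases h : (b : ℕ) = a + 1
  · have hab : a ≠ b := fun hab => by rw [hab] at h; omega
    rw [Matrix.sub_apply, diagonal_apply_ne _ hab, sub_zero]
    rcases hJ.2 a b h with h | h <;> simp [h]
  · simp [hJ.sub_diagonal_apply_eq_zero a b h]

theorem exp_smul_eq_exp_diagonal_mul (hJ : IsJordanForm J) (δ : ℝ) :
    NormedSpace.exp (δ • J) =
      NormedSpace.exp (δ • diagonal J.diag) * NormedSpace.exp (δ • (J - diagonal J.diag)) := by
  rw [← Matrix.exp_add_of_commute, ← smul_add, add_sub_cancel]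
  exact ((hJ.commute_diagonal_diag.sub_right (Commute.refl _)).smul_left δ).smul_right δ

end IsJordanForm

/-- **Bound from Floquet exponents.** If `Y = W⁻¹ J W` with `J` in Jordan form and
`λ` is the maximal real part of the eigenvalues of `Y`, then for every `δ > 1`,
`‖e^{δY}‖ ≤ c n δ^{n−1} e^{λδ}` with `c = ‖W‖ ‖W⁻¹‖` (operator norms induced by
the Euclidean norm). -/
theorem exp_norm_bound_of_jordan (n : ℕ) (Y W J : Matrix (Fin n) (Fin n) ℂ)
    (hW : IsUnit W) (hJ : IsJordanForm J) (hconj : Y = W⁻¹ * J * W)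
    (lam : ℝ) (hlam : IsGreatest {r : ℝ | ∃ μ ∈ spectrum ℂ Y, r = μ.re} lam)
    (c : ℝ) (hc : c = ‖W‖ * ‖W⁻¹‖) :
    ∀ δ : ℝ, 1 < δ →
      ‖NormedSpace.exp (δ • Y)‖ ≤ c * n * δ ^ (n - 1) * Real.exp (lam * δ) := by
  intro δ hδ
  have hspec : ∀ i, (J.diag i).re ≤ lam := fun i => hlam.2 ⟨J i i, by
    rw [hconj, ← hW.unit_spec, ← coe_units_inv, spectrum.units_conjugate']
    exact hJ.isUpperTriangular.diag_mem_spectrum i, rfl⟩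
  have hD := norm_exp_smul_diagonal_le J.diag (by linarith) hspec
  have hN : ‖NormedSpace.exp (δ • (J - diagonal J.diag))‖ ≤ n * δ ^ (n - 1) := by
    simpa using l2_opNorm_le_card_mul_of_norm_apply_le _ (by positivity)
      (norm_exp_smul_apply_le_of_superdiagonal hJ.sub_diagonal_apply_eq_zero
        hJ.norm_sub_diagonal_apply_le_one hδ.le)
  calc ‖NormedSpace.exp (δ • Y)‖
      = ‖W⁻¹ * (NormedSpace.exp (δ • diagonal J.diag) *
          NormedSpace.exp (δ • (J - diagonal J.diag))) * W‖ := by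
        rw [hconj, ← Matrix.smul_mul, ← Matrix.mul_smul, exp_conj' _ _ hW,
          hJ.exp_smul_eq_exp_diagonal_mul]
    _ ≤ ‖W⁻¹‖ * (‖NormedSpace.exp (δ • diagonal J.diag)‖ *
          ‖NormedSpace.exp (δ • (J - diagonal J.diag))‖) * ‖W‖ := by
        grw [norm_mul_le, norm_mul_le, norm_mul_le]
    _ ≤ ‖W⁻¹‖ * (Real.exp (lam * δ) * (n * δ ^ (n - 1))) * ‖W‖ := by gcongr
    _ = c * n * δ ^ (n - 1) * Real.exp (lam * δ) := by rw [hc]; ring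
end

section
/- If A is Hurwitz, then the Lyapunov equation A V + V Aᵀ + D = 0 with D symmetric positive semidefinite has the unique solution V = ∫₀^∞ e^{sA} D e^{sAᵀ} ds, and this V is symmetric positive semidefinite. -/
/-!
Put `Φ_X(s) = e^{sA} X e^{sAᵀ}`. Its derivative is `A Φ_X(s) + Φ_X(s) Aᵀ`, and `Φ_X` decays
exponentially because `e^{sA}` does: on a generalized eigenspace of `A` for the eigenvalue `μ`,
`e^{sA}` acts as `e^{sμ}` times a polynomial in `s`, and `Re μ < 0`. Integrating the derivative
over `(0, ∞)` therefore shows that `V_X = ∫₀^∞ Φ_X` solves `A V_X + V_X Aᵀ = -X`. So the Lyapunov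
operator `X ↦ A X + X Aᵀ` is surjective, hence injective, which gives uniqueness; and `V_D` is
positive semidefinite as an integral of the positive semidefinite matrices
`e^{sA} D (e^{sA})ᵀ`.
-/

open Matrix MeasureTheory Set Filter Asymptotics NormedSpace
open scoped Topology Nat

theorem Set.Finite.exists_pos_forall_re_lt_neg {S : Set ℂ} (hS : S.Finite)
    (h : ∀ μ ∈ S, μ.re < 0) : ∃ α > 0, ∀ μ ∈ S, μ.re < -α := by
  have hsmall : ∀ᶠ α in 𝓝[>] (0 : ℝ), ∀ μ ∈ S, μ.re < -α :=
    (eventually_all_finite hS).2 fun μ hμ => nhdsWithin_le_nhds <|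
      (eventually_lt_nhds (neg_pos.2 (h μ hμ))).mono fun α hα => by linarith
  obtain ⟨α, hα, hpos⟩ := (hsmall.and self_mem_nhdsWithin).exists
  exact ⟨α, hpos, hα⟩

theorem isBigO_cexp_mul_mul_pow {μ : ℂ} {α : ℝ} (hμ : μ.re < -α) (j : ℕ) :
    (fun s : ℝ => Complex.exp (s * μ) * s ^ j) =O[atTop] fun s => Real.exp (-α * s) := by
  have hpow := (isLittleO_pow_exp_pos_mul_atTop j (by linarith : 0 < -α - μ.re)).isBigO
  have hprod := hpow.mul (isBigO_refl (fun s : ℝ => Real.exp (μ.re * s)) atTop)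
  refine IsBigO.of_norm_left (hprod.congr' ?_ (.of_forall fun s => ?_))
  · filter_upwards [eventually_ge_atTop 0] with s hs
    simp [Complex.norm_exp, abs_of_nonneg hs, mul_comm]
  · dsimp only
    rw [← Real.exp_add]
    ring_nf

theorem Module.End.mem_spectrum_of_mem_maxGenEigenspace {K V : Type*} [Field K] [AddCommGroup V]
    [Module K V] [FiniteDimensional K V] {f : Module.End K V} {μ : K} {v : V}
    (hv : v ∈ f.maxGenEigenspace μ) (hv0 : v ≠ 0) : μ ∈ spectrum K f :=
  hasEigenvalue_iff_mem_spectrum.1 <|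
    HasUnifEigenvalue.lt zero_lt_one ((Submodule.ne_bot_iff _).2 ⟨v, hv, hv0⟩)

namespace Matrix

theorem integral_linearMap_comp {𝕜 m n X : Type*} [RCLike 𝕜] [Fintype m] [Fintype n]
    [DecidableEq m] [DecidableEq n] [MeasurableSpace X] {μ : Measure X} {F : X → Matrix m n 𝕜}
    (hF : ∀ i j, Integrable (fun x => F x i j) μ) (T : Matrix m n 𝕜 →ₗ[𝕜] 𝕜) :
    ∫ x, T (F x) ∂μ = T (of fun i j => ∫ x, F x i j ∂μ) := by
  obtain ⟨c, hT⟩ : ∃ c : m → n → 𝕜, ∀ M, T M = ∑ i, ∑ j, M i j * c i j := by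
    refine ⟨fun i j => T (single i j 1), fun M => ?_⟩
    conv_lhs => rw [matrix_eq_sum_single M]
    simp only [map_sum]
    refine Finset.sum_congr rfl fun i _ => Finset.sum_congr rfl fun j _ => ?_
    rw [← smul_eq_mul, ← map_smul, smul_single, smul_eq_mul, mul_one]
  simp_rw [hT, of_apply]
  rw [integral_finsetSum _ fun i _ => integrable_finsetSum _ fun j _ => (hF i j).mul_const _]
  refine Finset.sum_congr rfl fun i _ => ?_
  rw [integral_finsetSum _ fun j _ => (hF i j).mul_const _]
  exact Finset.sum_congr rfl fun j _ => integral_mul_const _ _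

variable {ι : Type*} [Fintype ι] [DecidableEq ι]

def IsHurwitz (A : Matrix ι ι ℝ) : Prop :=
  ∀ μ ∈ spectrum ℂ (A.map Complex.ofReal), μ.re < 0

def lyapunovMap {R : Type*} [CommRing R] (A : Matrix ι ι R) : Matrix ι ι R →ₗ[R] Matrix ι ι R :=
  LinearMap.mulLeft R A + LinearMap.mulRight R Aᵀ

@[simp]
theorem lyapunovMap_apply {R : Type*} [CommRing R] (A X : Matrix ι ι R) :
    lyapunovMap A X = A * X + X * Aᵀ :=
  rfl

noncomputable def lyapunovIntegrand (A X : Matrix ι ι ℝ) (s : ℝ) : Matrix ι ι ℝ :=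
  exp (s • A) * X * exp (s • Aᵀ)

/- Integrated entrywise, as in the statement: none of Mathlib's norms on `Matrix` carries its
topology instance up to reducible defeq, so `Integrable` does not elaborate on `Matrix` itself. -/
noncomputable def lyapunovIntegral (A X : Matrix ι ι ℝ) : Matrix ι ι ℝ :=
  of fun i j => ∫ s in Ioi 0, lyapunovIntegrand A X s i j

theorem lyapunovIntegrand_zero (A X : Matrix ι ι ℝ) : lyapunovIntegrand A X 0 = X := by
  simp [lyapunovIntegrand]

theorem PosSemidef.lyapunovIntegrand {A X : Matrix ι ι ℝ} (hX : X.PosSemidef) (s : ℝ) :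
    (A.lyapunovIntegrand X s).PosSemidef := by
  have h := hX.mul_mul_conjTranspose_same (exp (s • A))
  rwa [conjTranspose_eq_transpose_of_trivial, ← exp_transpose, transpose_smul] at h

section OperatorNorm

open scoped Matrix.Norms.Operator

theorem exp_mulVec_of_pow_mulVec_eq_zero {𝕂 : Type*} [RCLike 𝕂] {N : Matrix ι ι 𝕂} {v : ι → 𝕂}
    {k : ℕ} (hv : N ^ k *ᵥ v = 0) :
    exp N *ᵥ v = ∑ j ∈ Finset.range k, (j ! : 𝕂)⁻¹ • (N ^ j *ᵥ v) := by
  have hsum := (exp_series_hasSum_exp' (𝕂 := 𝕂) N).map (mulVec.addMonoidHomLeft v)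
    (continuous_id.matrix_mulVec continuous_const)
  refine hsum.unique (hasSum_sum_of_ne_finset_zero fun j hj => ?_) |>.trans
    (Finset.sum_congr rfl fun j _ => smul_mulVec _ _ _)
  rw [Finset.mem_range, not_lt] at hj
  show ((j ! : 𝕂)⁻¹ • N ^ j) *ᵥ v = 0
  rw [smul_mulVec, ← Nat.sub_add_cancel hj, pow_add, ← mulVec_mulVec, hv, mulVec_zero, smul_zero]

theorem exp_smul_mulVec_of_pow_sub_smul_mulVec_eq_zero (B : Matrix ι ι ℂ) {μ : ℂ}
    {v : ι → ℂ} {k : ℕ} (hv : (B - μ • 1) ^ k *ᵥ v = 0) (s : ℝ) :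
    exp (s • B) *ᵥ v = ∑ j ∈ Finset.range k,
      (Complex.exp (s * μ) * s ^ j / j !) • ((B - μ • 1) ^ j *ᵥ v) := by
  have hsplit : s • B = algebraMap ℂ _ (s * μ) + (s : ℂ) • (B - μ • 1) := by
    rw [Algebra.algebraMap_eq_smul_one, smul_sub, smul_smul, ← Complex.coe_smul]
    abel
  have hN : ((s : ℂ) • (B - μ • 1)) ^ k *ᵥ v = 0 := by
    rw [smul_pow, smul_mulVec, hv, smul_zero]
  have hscalar : exp (algebraMap ℂ (Matrix ι ι ℂ) (s * μ)) = algebraMap ℂ _ (exp (s * μ)) :=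
    (algebraMap_exp_comm _).symm
  rw [hsplit, Matrix.exp_add_of_commute _ _ (Algebra.commute_algebraMap_left _ _), hscalar,
    Algebra.algebraMap_eq_smul_one, smul_mul_assoc, one_mul, smul_mulVec,
    exp_mulVec_of_pow_mulVec_eq_zero hN, Finset.smul_sum]
  refine Finset.sum_congr rfl fun j _ => ?_
  rw [smul_pow, smul_mulVec, smul_smul, smul_smul, ← Complex.exp_eq_exp_ℂ]
  ring_nf

theorem isBigO_exp_smul_mulVec {B : Matrix ι ι ℂ} {α : ℝ}
    (hB : ∀ μ ∈ spectrum ℂ B, μ.re < -α) (v : ι → ℂ) :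
    (fun s : ℝ => exp (s • B) *ᵥ v) =O[atTop] fun s => Real.exp (-α * s) := by
  have hv : v ∈ ⨆ μ, Module.End.maxGenEigenspace (toLin' B) μ := by
    rw [Module.End.iSup_maxGenEigenspace_eq_top]; trivial
  induction hv using Submodule.iSup_induction' with
  | mem μ v hv =>
    obtain rfl | hv0 := eq_or_ne v 0
    · simp only [mulVec_zero]
      exact isBigO_zero _ _
    obtain ⟨k, hk⟩ := (Module.End.mem_maxGenEigenspace _ _ _).1 hv
    have hμ : μ.re < -α := hB μ <| by
      simpa using Module.End.mem_spectrum_of_mem_maxGenEigenspace hv hv0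
    have hkv : (B - μ • 1) ^ k *ᵥ v = 0 := by
      have : toLinAlgEquiv' ((B - μ • 1) ^ k) v = 0 := by
        rwa [map_pow, map_sub, map_smul, map_one]
      rwa [toLinAlgEquiv'_apply] at this
    simp_rw [exp_smul_mulVec_of_pow_sub_smul_mulVec_eq_zero B hkv]
    refine IsBigO.fun_sum fun j _ => ?_
    refine ((isBigO_cexp_mul_mul_pow hμ j).smul (isBigO_const_const
      ((j ! : ℂ)⁻¹ • (B - μ • 1) ^ j *ᵥ v) (one_ne_zero : (1 : ℝ) ≠ 0) atTop)).congr
      (fun s => ?_) (fun s => ?_)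
    · rw [smul_smul, div_eq_mul_inv]
    · rw [smul_eq_mul, mul_one]
  | zero =>
    simp only [mulVec_zero]
    exact isBigO_zero _ _
  | add v w _ _ hv hw => simpa [mulVec_add] using hv.add hw

theorem exp_map_ofReal (A : Matrix ι ι ℝ) :
    (exp A).map Complex.ofReal = exp (A.map Complex.ofReal) :=
  map_exp (Complex.ofRealHom.mapMatrix (m := ι))
    (continuous_id.matrix_map Complex.continuous_ofReal) A

theorem isBigO_exp_smul_apply {A : Matrix ι ι ℝ} {α : ℝ}
    (hA : ∀ μ ∈ spectrum ℂ (A.map Complex.ofReal), μ.re < -α) (i j : ι) :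
    (fun s : ℝ => exp (s • A) i j) =O[atTop] fun s => Real.exp (-α * s) := by
  have h := isBigO_pi.1 (isBigO_exp_smul_mulVec hA (Pi.single j 1)) i
  refine isBigO_norm_left.1 ((isBigO_norm_left.2 h).congr_left fun s => ?_)
  have hmap : (s • A).map Complex.ofReal = s • A.map Complex.ofReal := by
    ext; simp
  rw [mulVec_single_one, col_apply, ← hmap, ← exp_map_ofReal, map_apply, Complex.norm_real]

theorem isBigO_of_forall_isBigO_apply {m n α : Type*} [Fintype m] [Fintype n]
    [DecidableEq m] [DecidableEq n] {l : Filter α} {g : α → ℝ} {M : α → Matrix m n ℝ}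
    (h : ∀ i j, (fun x => M x i j) =O[l] g) : M =O[l] g := by
  have hM : M = fun x => ∑ i, ∑ j, singleLinearMap ℝ i j (M x i j) := by
    ext x : 1
    exact matrix_eq_sum_single (M x)
  rw [hM]
  refine IsBigO.fun_sum fun i _ => IsBigO.fun_sum fun j _ => ?_
  exact ((singleLinearMap ℝ i j).toContinuousLinearMap.isBigO_comp _ l).trans (h i j)

variable {A : Matrix ι ι ℝ}

theorem IsHurwitz.exists_isBigO_exp_smul_apply (hA : A.IsHurwitz) : ∃ α > 0, ∀ i j,
    (fun s : ℝ => exp (s • A) i j) =O[atTop] fun s => Real.exp (-α * s) := by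
  obtain ⟨α, hα, hre⟩ := (finite_spectrum _).exists_pos_forall_re_lt_neg hA
  exact ⟨α, hα, isBigO_exp_smul_apply hre⟩

theorem IsHurwitz.exists_isBigO_lyapunovIntegrand (hA : A.IsHurwitz) (X : Matrix ι ι ℝ) :
    ∃ b > 0, lyapunovIntegrand A X =O[atTop] fun s => Real.exp (-b * s) := by
  obtain ⟨α, hα, h⟩ := hA.exists_isBigO_exp_smul_apply
  have hE := isBigO_of_forall_isBigO_apply h
  have hEt : (fun s : ℝ => exp (s • Aᵀ)) =O[atTop] fun s => Real.exp (-α * s) :=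
    isBigO_of_forall_isBigO_apply fun i j => by
      simpa only [← transpose_smul, exp_transpose, transpose_apply] using h j i
  refine ⟨2 * α, by positivity, ((hE.mul (isBigO_const_const X (one_ne_zero : (1 : ℝ) ≠ 0)
    atTop)).mul hEt).congr_right fun s => ?_⟩
  rw [mul_one, ← Real.exp_add]
  ring_nf

theorem hasDerivAt_lyapunovIntegrand (A X : Matrix ι ι ℝ) (s : ℝ) :
    HasDerivAt (lyapunovIntegrand A X) (lyapunovMap A (lyapunovIntegrand A X s)) s := by
  have h := ((hasDerivAt_exp_smul_const' A s).mul_const X).mul (hasDerivAt_exp_smul_const Aᵀ s)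
  rw [show lyapunovMap A (lyapunovIntegrand A X s) = A * exp (s • A) * X * exp (s • Aᵀ) +
      exp (s • A) * X * (exp (s • Aᵀ) * Aᵀ) by
    simp only [lyapunovMap_apply, lyapunovIntegrand]; noncomm_ring]
  exact h

theorem continuous_lyapunovIntegrand (A X : Matrix ι ι ℝ) : Continuous (lyapunovIntegrand A X) :=
  continuous_iff_continuousAt.2 fun s => (hasDerivAt_lyapunovIntegrand A X s).continuousAt

theorem IsHurwitz.integrableOn_lyapunovIntegrand (hA : A.IsHurwitz) (X : Matrix ι ι ℝ)
    (T : Matrix ι ι ℝ →ₗ[ℝ] ℝ) :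
    IntegrableOn (fun s => T (lyapunovIntegrand A X s)) (Ioi 0) := by
  obtain ⟨b, hb, ho⟩ := hA.exists_isBigO_lyapunovIntegrand X
  exact integrable_of_isBigO_exp_neg hb
    (T.toContinuousLinearMap.continuous.comp (continuous_lyapunovIntegrand A X)).continuousOn
    ((T.toContinuousLinearMap.isBigO_comp _ _).trans ho)

theorem IsHurwitz.tendsto_lyapunovIntegrand (hA : A.IsHurwitz) (X : Matrix ι ι ℝ)
    (T : Matrix ι ι ℝ →ₗ[ℝ] ℝ) :
    Tendsto (fun s => T (lyapunovIntegrand A X s)) atTop (𝓝 0) := by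
  obtain ⟨b, hb, ho⟩ := hA.exists_isBigO_lyapunovIntegrand X
  exact ((T.toContinuousLinearMap.isBigO_comp _ _).trans ho).trans_tendsto <|
    Real.tendsto_exp_atBot.comp <| tendsto_id.const_mul_atTop_of_neg (neg_neg_iff_pos.2 hb)

theorem IsHurwitz.integral_lyapunovMap_lyapunovIntegrand (hA : A.IsHurwitz) (X : Matrix ι ι ℝ)
    (T : Matrix ι ι ℝ →ₗ[ℝ] ℝ) :
    ∫ s in Ioi 0, T (lyapunovMap A (lyapunovIntegrand A X s)) = -T X := by
  have hderiv : ∀ s ∈ Ici (0 : ℝ), HasDerivAt (fun s => T (lyapunovIntegrand A X s))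
      (T (lyapunovMap A (lyapunovIntegrand A X s))) s := fun s _ =>
    T.toContinuousLinearMap.hasFDerivAt.comp_hasDerivAt s (hasDerivAt_lyapunovIntegrand A X s)
  rw [integral_Ioi_of_hasDerivAt_of_tendsto' hderiv
    (hA.integrableOn_lyapunovIntegrand X (T ∘ₗ lyapunovMap A)) (hA.tendsto_lyapunovIntegrand X T),
    lyapunovIntegrand_zero, zero_sub]

end OperatorNorm

variable {A : Matrix ι ι ℝ}

theorem IsHurwitz.lyapunovMap_lyapunovIntegral (hA : A.IsHurwitz) (X : Matrix ι ι ℝ) :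
    lyapunovMap A (lyapunovIntegral A X) = -X := by
  ext i j
  have h := integral_linearMap_comp (F := lyapunovIntegrand A X)
    (fun k l => hA.integrableOn_lyapunovIntegrand X (entryLinearMap ℝ ℝ k l))
    (entryLinearMap ℝ ℝ i j ∘ₗ lyapunovMap A)
  simp only [LinearMap.comp_apply] at h
  rw [hA.integral_lyapunovMap_lyapunovIntegrand X (entryLinearMap ℝ ℝ i j)] at h
  simpa [lyapunovIntegral] using h.symm

theorem IsHurwitz.posSemidef_lyapunovIntegral (hA : A.IsHurwitz) {X : Matrix ι ι ℝ}
    (hX : X.PosSemidef) : (lyapunovIntegral A X).PosSemidef := by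
  have hint := fun k l => hA.integrableOn_lyapunovIntegrand X (entryLinearMap ℝ ℝ k l)
  refine posSemidef_iff_dotProduct_mulVec.2 ⟨?_, fun x => ?_⟩
  · ext i j
    simp only [lyapunovIntegral, conjTranspose_apply, star_trivial, of_apply]
    exact integral_congr_ae <| .of_forall fun s => (hX.lyapunovIntegrand s).1.apply i j
  · let q : Matrix ι ι ℝ →ₗ[ℝ] ℝ :=
      { toFun := fun M => star x ⬝ᵥ M *ᵥ x
        map_add' := fun M N => by simp only [add_mulVec, dotProduct_add]
        map_smul' := fun c M => by simp only [smul_mulVec, dotProduct_smul, RingHom.id_apply] }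
    calc 0 ≤ ∫ s in Ioi 0, q (lyapunovIntegrand A X s) :=
          setIntegral_nonneg measurableSet_Ioi fun s _ =>
            (posSemidef_iff_dotProduct_mulVec.1 (hX.lyapunovIntegrand s)).2 x
      _ = star x ⬝ᵥ lyapunovIntegral A X *ᵥ x := integral_linearMap_comp hint q

end Matrix

theorem lyapunov_equation_solution_general (n : ℕ) (A D : Matrix (Fin n) (Fin n) ℝ)
    (hA : ∀ μ ∈ spectrum ℂ (A.map Complex.ofReal), μ.re < 0)
    (hDpsd : D.PosSemidef)
    (V : Matrix (Fin n) (Fin n) ℝ)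
    (hV : ∀ i j, V i j = ∫ s in Set.Ioi (0 : ℝ),
      (NormedSpace.exp (s • A) * D * NormedSpace.exp (s • Aᵀ)) i j) :
    A * V + V * Aᵀ + D = 0 ∧
    (∀ W : Matrix (Fin n) (Fin n) ℝ, A * W + W * Aᵀ + D = 0 → W = V) ∧
    V.IsSymm ∧ V.PosSemidef := by
  have hVD : V = lyapunovIntegral A D := ext hV
  have hLV : lyapunovMap A V = -D := hVD ▸ IsHurwitz.lyapunovMap_lyapunovIntegral hA D
  have hinj : Function.Injective (lyapunovMap A) := LinearMap.injective_iff_surjective.2 fun X =>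
    ⟨lyapunovIntegral A (-X), by rw [IsHurwitz.lyapunovMap_lyapunovIntegral hA, neg_neg]⟩
  have hpsd : V.PosSemidef := hVD ▸ IsHurwitz.posSemidef_lyapunovIntegral hA hDpsd
  refine ⟨by rw [← lyapunovMap_apply, hLV, neg_add_cancel], fun W hW => hinj ?_,
    isHermitian_iff_isSymm.1 hpsd.isHermitian, hpsd⟩
  rw [hLV, lyapunovMap_apply, eq_neg_of_add_eq_zero_left hW]

/-- If `A` is Hurwitz, the Lyapunov equation `A V + V Aᵀ + D = 0` with `D`
symmetric positive semidefinite has the unique solution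
`V = ∫₀^∞ e^{sA} D e^{sAᵀ} ds`, and this `V` is symmetric positive semidefinite. -/
theorem lyapunov_equation_solution (n : ℕ) (A D : Matrix (Fin n) (Fin n) ℝ)
    (hA : ∀ μ ∈ spectrum ℂ (A.map Complex.ofReal), μ.re < 0)
    (hD : D.IsSymm) (hDpsd : D.PosSemidef)
    (V : Matrix (Fin n) (Fin n) ℝ)
    (hV : ∀ i j, V i j = ∫ s in Set.Ioi (0 : ℝ),
      (NormedSpace.exp (s • A) * D * NormedSpace.exp (s • Aᵀ)) i j) :
    A * V + V * Aᵀ + D = 0 ∧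
    (∀ W : Matrix (Fin n) (Fin n) ℝ, A * W + W * Aᵀ + D = 0 → W = V) ∧
    V.IsSymm ∧ V.PosSemidef :=
  lyapunov_equation_solution_general n A D hA hDpsd V hV
end

section
/- The 4×4 matrix A_s = (1/2)·[[−γ, 0, 0, G₋₁−G₀], [0, −γ, G₋₁+G₀, 0], [0, G₋₁−G₀, −2κ, 0], [G₋₁+G₀, 0, 0, −2κ]] is Hurwitz (all eigenvalues have negative real part) if and only if G₋₁² − G₀² < 2γκ, given γ > 0 and κ > 0. -/
/-!
Swapping coordinates into the order (1, 4, 2, 3) makes `A_s` block diagonal, with two `2 × 2`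
blocks of trace `-(γ/2 + κ)` and determinant `(2γκ - (G₋₁² - G₀²)) / 4`. So the characteristic
polynomial of `A_s` is the square of `μ² + (γ/2 + κ) μ + (2γκ - (G₋₁² - G₀²)) / 4`, and a monic
real quadratic has both roots in the open left half-plane iff both its coefficients are positive.
-/

open Matrix Polynomial

theorem quadratic_roots_re_neg_iff (b c : ℝ) :
    (∀ z : ℂ, z ^ 2 + b * z + c = 0 → z.re < 0) ↔ 0 < b ∧ 0 < c := by
  obtain ⟨s, hs⟩ := IsAlgClosed.exists_eq_mul_self (discrim 1 (b : ℂ) c)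
  have hroots (z : ℂ) : z ^ 2 + b * z + c = 0 ↔ z = (-b + s) / 2 ∨ z = (-b - s) / 2 := by
    simpa [sq] using quadratic_eq_zero_iff one_ne_zero hs z
  have hre : b ^ 2 - 4 * c = s.re ^ 2 - s.im ^ 2 := by
    simpa [discrim, sq] using congrArg Complex.re hs
  have him : s.re * s.im = 0 := by
    have := congrArg Complex.im hs
    simp [discrim, sq] at this
    linarith
  simp only [hroots, forall_eq_or_imp, forall_eq, Complex.div_ofNat_re, Complex.add_re,
    Complex.sub_re, Complex.neg_re, Complex.ofReal_re]
  rcases mul_eq_zero.1 him with hs_re | hs_im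
  · rw [hs_re] at hre ⊢
    constructor
    · rintro ⟨hroot, -⟩
      constructor <;> nlinarith
    · rintro ⟨hb, -⟩
      constructor <;> linarith
  · rw [hs_im] at hre
    constructor
    · rintro ⟨h_plus, h_minus⟩
      constructor <;> nlinarith
    · rintro ⟨hb, hc⟩
      have : |s.re| < b := abs_lt_of_sq_lt_sq (by nlinarith) hb.le
      constructor <;> linarith [abs_lt.1 this]

theorem det_fin_four_cross {R : Type*} [CommRing R] (a b d e p q r s : R) :
    !![a, 0, 0, p; 0, b, q, 0; 0, r, d, 0; s, 0, 0, e].det = (a * e - p * s) * (b * d - q * r) := by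
  simp [det_succ_row_zero, Fin.sum_univ_succ, Fin.succAbove]
  ring

noncomputable def driftMatrix (γ κ G₀ Gm : ℝ) : Matrix (Fin 4) (Fin 4) ℝ :=
  (1 / 2 : ℝ) •
    !![-γ, 0, 0, Gm - G₀;
       0, -γ, Gm + G₀, 0;
       0, Gm - G₀, -2 * κ, 0;
       Gm + G₀, 0, 0, -2 * κ]

theorem mem_spectrum_driftMatrix_iff (γ κ G₀ Gm : ℝ) (μ : ℂ) :
    μ ∈ spectrum ℂ ((driftMatrix γ κ G₀ Gm).map Complex.ofReal) ↔
      μ ^ 2 + ((γ / 2 + κ : ℝ) : ℂ) * μ + ((2 * γ * κ - (Gm ^ 2 - G₀ ^ 2)) / 4 : ℝ) = 0 := by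
  have hcharmatrix : scalar (Fin 4) μ - (driftMatrix γ κ G₀ Gm).map Complex.ofReal =
      !![μ + γ / 2, 0, 0, -(Gm - G₀) / 2;
         0, μ + γ / 2, -(Gm + G₀) / 2, 0;
         0, -(Gm - G₀) / 2, μ + κ, 0;
         -(Gm + G₀) / 2, 0, 0, μ + κ] := by
    ext i j
    fin_cases i <;> fin_cases j <;> simp [driftMatrix] <;> ring
  rw [mem_spectrum_iff_isRoot_charpoly, IsRoot, eval_charpoly, hcharmatrix, det_fin_four_cross]
  refine Iff.trans ?_ (pow_eq_zero_iff two_ne_zero)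
  push_cast
  constructor <;> intro h <;> linear_combination h

/-- The RWA drift matrix
`A_s = (1/2)·[[−γ,0,0,G₋₁−G₀],[0,−γ,G₋₁+G₀,0],[0,G₋₁−G₀,−2κ,0],[G₋₁+G₀,0,0,−2κ]]`
is Hurwitz if and only if `G₋₁² − G₀² < 2γκ` (given `γ, κ > 0`). -/
theorem As_hurwitz_iff (γ κ G₀ Gm : ℝ) (hγ : 0 < γ) (hκ : 0 < κ)
    (As : Matrix (Fin 4) (Fin 4) ℝ)
    (hAs : As = (1 / 2 : ℝ) •
      !![-γ, 0, 0, Gm - G₀;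
         0, -γ, Gm + G₀, 0;
         0, Gm - G₀, -2 * κ, 0;
         Gm + G₀, 0, 0, -2 * κ]) :
    (∀ μ ∈ spectrum ℂ (As.map Complex.ofReal), μ.re < 0) ↔ Gm ^ 2 - G₀ ^ 2 < 2 * γ * κ := by
  change As = driftMatrix γ κ G₀ Gm at hAs
  subst hAs
  simp only [mem_spectrum_driftMatrix_iff]
  rw [quadratic_roots_re_neg_iff]
  constructor
  · rintro ⟨-, hc⟩
    linarith
  · intro h
    exact ⟨by positivity, by linarith⟩
end

section
/- Assume γ > 0, κ > 0, n̄ ≥ 0, and G₋₁² − G₀² < 2γκ. Then the steady-state covariance matrix V_s solving A_s V_s + V_s A_sᵀ + D_s = 0, with A_s as in the RWA model and D_s = diag(γ(n̄+1/2), γ(n̄+1/2), κ, κ), has mirror-block entries (V_s)₁₁ = f₋, (V_s)₂₂ = f₊, (V_s)₁₂ = 0, where f± = 1/2 + n̄ − 2κ(G₀ ± G₋₁)(G₀ n̄ ∓ G₋₁(n̄+1)) / ((γ + 2κ)(G₀² − G₋₁² + 2γκ)). -/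
/-!
In the coordinate order `0, 3, 1, 2` both `A_s` and `D_s` are block diagonal, the two diagonal
blocks of `A_s` being `A₁ = driftBlock γ κ (G₋₁ - G₀) (G₋₁ + G₀)` and its transpose. The Lyapunov
equation therefore splits into a 2×2 Lyapunov equation for each diagonal block of `V`, solved by
elimination, and the homogeneous equation `A₁ W + W A₁ = 0` for the off-diagonal block `W`. In the
latter, the four entry equations force `(2γκ - G₋₁² + G₀²) · tr W = 0`, hence `tr W = 0`, and then
`W = 0`.
-/

open Matrix

section Blocks

variable {m n α : Type*} [Fintype m] [Fintype n] [NonUnitalNonAssocSemiring α]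

theorem lyapunov_submatrix_equiv (e : m ≃ n) (A V D : Matrix n n α) :
    (A * V + V * Aᵀ + D).submatrix e e =
      A.submatrix e e * V.submatrix e e + V.submatrix e e * (A.submatrix e e)ᵀ +
        D.submatrix e e := by
  simp only [submatrix_mul_equiv, transpose_submatrix]
  rfl

theorem fromBlocks_lyapunov_eq_zero_iff (A₁ D₁ P : Matrix m m α) (A₂ D₂ S : Matrix n n α)
    (Q : Matrix m n α) (R : Matrix n m α) :
    fromBlocks A₁ 0 0 A₂ * fromBlocks P Q R S + fromBlocks P Q R S * (fromBlocks A₁ 0 0 A₂)ᵀ +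
        fromBlocks D₁ 0 0 D₂ = 0 ↔
      A₁ * P + P * A₁ᵀ + D₁ = 0 ∧ A₁ * Q + Q * A₂ᵀ = 0 ∧ A₂ * R + R * A₁ᵀ = 0 ∧
        A₂ * S + S * A₂ᵀ + D₂ = 0 := by
  simp [fromBlocks_transpose, fromBlocks_multiply, fromBlocks_add, ← fromBlocks_zero,
    fromBlocks_inj]

end Blocks

noncomputable def driftBlock (γ κ a b : ℝ) : Matrix (Fin 2) (Fin 2) ℝ :=
  (1 / 2 : ℝ) • !![-γ, a; b, -2 * κ]

section DriftBlock

variable {γ κ a b : ℝ}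

theorem driftBlock_lyapunov_apply_zero_zero (d : ℝ) (hγ : γ ≠ 0) (hγκ : γ + 2 * κ ≠ 0)
    (hab : a * b ≠ 2 * γ * κ) {V : Matrix (Fin 2) (Fin 2) ℝ}
    (hV : driftBlock γ κ a b * V + V * (driftBlock γ κ a b)ᵀ + diagonal ![d, κ] = 0) :
    V 0 0 = d / γ + a * κ * (a * γ + 2 * b * d) / (γ * (γ + 2 * κ) * (2 * γ * κ - a * b)) := by
  have h00 := congrFun₂ hV 0 0
  have h01 := congrFun₂ hV 0 1
  have h10 := congrFun₂ hV 1 0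
  have h11 := congrFun₂ hV 1 1
  simp only [driftBlock, Matrix.add_apply, Matrix.mul_apply, Fin.sum_univ_two, transpose_apply,
    Matrix.smul_apply, of_apply, cons_val', cons_val_zero, cons_val_one, cons_val_fin_one,
    diagonal_apply, zero_ne_one, one_ne_zero, if_true, if_false, Matrix.zero_apply,
    smul_eq_mul] at h00 h01 h10 h11
  have hΔ : 2 * γ * κ - a * b ≠ 0 := sub_ne_zero.mpr hab.symm
  have hsymm : V 1 0 = V 0 1 := mul_left_cancel₀ hγκ (by linear_combination 2 * h01 - 2 * h10)
  have hp : V 0 1 = κ * (a * γ + 2 * b * d) / ((γ + 2 * κ) * (2 * γ * κ - a * b)) := by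
    rw [eq_div_iff (mul_ne_zero hγκ hΔ)]
    linear_combination -4 * γ * κ * h01 - γ * a * h11 - 2 * κ * b * h00 +
      (γ * a * b / 2 + κ * a * b) * hsymm
  have hx : V 0 0 = (d + a * V 0 1) / γ := by
    rw [eq_div_iff hγ]
    linear_combination -h00 + a / 2 * hsymm
  rw [hx, hp]
  field_simp

theorem driftBlock_sylvester_eq_zero (hκ : κ ≠ 0) (hγκ : γ + 2 * κ ≠ 0)
    (hab : a * b ≠ 2 * γ * κ) {W : Matrix (Fin 2) (Fin 2) ℝ}
    (hW : driftBlock γ κ a b * W + W * (driftBlock γ κ b a)ᵀ = 0) : W = 0 := by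
  have h00 := congrFun₂ hW 0 0
  have h01 := congrFun₂ hW 0 1
  have h10 := congrFun₂ hW 1 0
  have h11 := congrFun₂ hW 1 1
  simp only [driftBlock, Matrix.add_apply, Matrix.mul_apply, Fin.sum_univ_two, transpose_apply,
    Matrix.smul_apply, of_apply, cons_val', cons_val_zero, cons_val_one, cons_val_fin_one,
    Matrix.zero_apply, smul_eq_mul] at h00 h01 h10 h11
  have htrace : W 0 0 + W 1 1 = 0 := by
    refine (mul_eq_zero.mp ?_).resolve_left (sub_ne_zero.mpr hab.symm)
    linear_combination -(2 * κ * h00 + γ * h11 + a * h10 + b * h01)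
  have hw01 : W 0 1 = 0 :=
    (mul_eq_zero.mp (by linear_combination -2 * h01 + a * htrace)).resolve_left hγκ
  have hw10 : W 1 0 = 0 :=
    (mul_eq_zero.mp (by linear_combination -2 * h10 + b * htrace)).resolve_left hγκ
  have hw11 : W 1 1 = 0 :=
    (mul_eq_zero.mp (by linear_combination -h11 / 2 + b / 4 * hw01 + a / 4 * hw10)).resolve_left hκ
  ext i j
  fin_cases i <;> fin_cases j
  all_goals simp [hw01, hw10, hw11, eq_neg_of_add_eq_zero_left htrace]

noncomputable def rwaQuadratureOrder : Fin 2 ⊕ Fin 2 ≃ Fin 4 :=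
  Equiv.ofBijective (Sum.elim ![0, 3] ![1, 2]) (by decide)

theorem rwa_steady_state_variances_general (γ κ nb G₀ Gm : ℝ)
    (hγ : 0 < γ) (hκ : 0 < κ)
    (hstab : Gm ^ 2 - G₀ ^ 2 < 2 * γ * κ)
    (As Ds : Matrix (Fin 4) (Fin 4) ℝ)
    (hAs : As = (1 / 2 : ℝ) •
      !![-γ, 0, 0, Gm - G₀;
         0, -γ, Gm + G₀, 0;
         0, Gm - G₀, -2 * κ, 0;
         Gm + G₀, 0, 0, -2 * κ])
    (hDs : Ds = Matrix.diagonal ![γ * (nb + 1 / 2), γ * (nb + 1 / 2), κ, κ]) :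
    ∀ V : Matrix (Fin 4) (Fin 4) ℝ, As * V + V * Asᵀ + Ds = 0 →
      V 0 0 = 1 / 2 + nb -
          2 * κ * (G₀ - Gm) * (G₀ * nb + Gm * (nb + 1)) /
            ((γ + 2 * κ) * (G₀ ^ 2 - Gm ^ 2 + 2 * γ * κ)) ∧
      V 1 1 = 1 / 2 + nb -
          2 * κ * (G₀ + Gm) * (G₀ * nb - Gm * (nb + 1)) /
            ((γ + 2 * κ) * (G₀ ^ 2 - Gm ^ 2 + 2 * γ * κ)) ∧
      V 0 1 = 0 := by
  intro V hV
  set e := rwaQuadratureOrder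
  have hA : As.submatrix e e = fromBlocks (driftBlock γ κ (Gm - G₀) (Gm + G₀)) 0 0
      (driftBlock γ κ (Gm + G₀) (Gm - G₀)) := by
    subst hAs
    ext (i | i) (j | j) <;> fin_cases i <;> fin_cases j <;>
      simp [e, rwaQuadratureOrder, driftBlock]
  have hD : Ds.submatrix e e =
      fromBlocks (diagonal ![γ * (nb + 1 / 2), κ]) 0 0 (diagonal ![γ * (nb + 1 / 2), κ]) := by
    subst hDs
    ext (i | i) (j | j) <;> fin_cases i <;> fin_cases j <;>
      simp [e, rwaQuadratureOrder]
  have hblocks : (As * V + V * Asᵀ + Ds).submatrix e e = 0 := by rw [hV]; rfl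
  rw [lyapunov_submatrix_equiv, hA, hD, ← fromBlocks_toBlocks (V.submatrix e e),
    fromBlocks_lyapunov_eq_zero_iff] at hblocks
  obtain ⟨hx, hxy, -, hy⟩ := hblocks
  have hγκ : γ + 2 * κ ≠ 0 := by positivity
  have hab : (Gm - G₀) * (Gm + G₀) ≠ 2 * γ * κ := by nlinarith
  have hba : (Gm + G₀) * (Gm - G₀) ≠ 2 * γ * κ := by nlinarith
  refine ⟨?_, ?_, ?_⟩
  · rw [show V 0 0 = (V.submatrix e e).toBlocks₁₁ 0 0 from rfl,
      driftBlock_lyapunov_apply_zero_zero _ hγ.ne' hγκ hab hx]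
    field_simp
    ring
  · rw [show V 1 1 = (V.submatrix e e).toBlocks₂₂ 0 0 from rfl,
      driftBlock_lyapunov_apply_zero_zero _ hγ.ne' hγκ hba hy]
    field_simp
    ring
  · exact congrFun₂ (driftBlock_sylvester_eq_zero hκ.ne' hγκ hab hxy) 0 0

/-- **Steady-state mirror variances in the RWA.** The covariance matrix `V_s` solving
`A_s V_s + V_s A_sᵀ + D_s = 0` has mirror-block entries `(V_s)₁₁ = f₋`,
`(V_s)₂₂ = f₊`, `(V_s)₁₂ = 0`, where
`f± = 1/2 + n̄ − 2κ(G₀ ± G₋₁)(G₀n̄ ∓ G₋₁(n̄+1)) / ((γ+2κ)(G₀²−G₋₁²+2γκ))`. -/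
theorem rwa_steady_state_variances (γ κ nb G₀ Gm : ℝ)
    (hγ : 0 < γ) (hκ : 0 < κ) (hnb : 0 ≤ nb)
    (hstab : Gm ^ 2 - G₀ ^ 2 < 2 * γ * κ)
    (As Ds : Matrix (Fin 4) (Fin 4) ℝ)
    (hAs : As = (1 / 2 : ℝ) •
      !![-γ, 0, 0, Gm - G₀;
         0, -γ, Gm + G₀, 0;
         0, Gm - G₀, -2 * κ, 0;
         Gm + G₀, 0, 0, -2 * κ])
    (hDs : Ds = Matrix.diagonal ![γ * (nb + 1 / 2), γ * (nb + 1 / 2), κ, κ]) :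
    ∀ V : Matrix (Fin 4) (Fin 4) ℝ, As * V + V * Asᵀ + Ds = 0 →
      V 0 0 = 1 / 2 + nb -
          2 * κ * (G₀ - Gm) * (G₀ * nb + Gm * (nb + 1)) /
            ((γ + 2 * κ) * (G₀ ^ 2 - Gm ^ 2 + 2 * γ * κ)) ∧
      V 1 1 = 1 / 2 + nb -
          2 * κ * (G₀ + Gm) * (G₀ * nb - Gm * (nb + 1)) /
            ((γ + 2 * κ) * (G₀ ^ 2 - Gm ^ 2 + 2 * γ * κ)) ∧
      V 0 1 = 0 :=
  rwa_steady_state_variances_general γ κ nb G₀ Gm hγ hκ hstab As Ds hAs hDs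
end DriftBlock
end
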